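/- arXiv:2510.15274 — 5 statements merged into one kernel-verified Lean document; each statement's English description precedes it below -/
import Mathlib

section
/- Skew-symmetry of the convective bilinear forms: for all periodic grid functions u and v on the M₁×M₂ periodic grid with step size h > 0, one has ⟨ψx(u,v), v⟩ = 0, ⟨ψy(u,v), v⟩ = 0, and ⟨ψh(u,v), v⟩ = 0. -/
open Real Finset Asymptotics

/-- A periodic grid function on the `M₁ × M₂` periodic grid. -/
abbrev GridFun (M₁ M₂ : ℕ) : Type := ZMod M₁ × ZMod M₂ → ℝ

variable {M₁ M₂ : ℕ}

/-- Discrete inner product `⟨u,v⟩ = h² Σ_a Σ_b u(a,b) v(a,b)`. -/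
noncomputable def gip [NeZero M₁] [NeZero M₂] (h : ℝ) (u v : GridFun M₁ M₂) : ℝ :=
  h ^ 2 * ∑ a : ZMod M₁, ∑ b : ZMod M₂, u (a, b) * v (a, b)

/-- Discrete L² norm. -/
noncomputable def gnorm [NeZero M₁] [NeZero M₂] (h : ℝ) (v : GridFun M₁ M₂) : ℝ :=
  Real.sqrt (gip h v v)

/-- Forward difference in `x`. -/
noncomputable def dx (h : ℝ) (v : GridFun M₁ M₂) : GridFun M₁ M₂ :=
  fun p => (v (p.1 + 1, p.2) - v p) / h

/-- Forward difference in `y`. -/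
noncomputable def dy (h : ℝ) (v : GridFun M₁ M₂) : GridFun M₁ M₂ :=
  fun p => (v (p.1, p.2 + 1) - v p) / h

/-- Central difference in `x`. -/
noncomputable def dhx (h : ℝ) (v : GridFun M₁ M₂) : GridFun M₁ M₂ :=
  fun p => (v (p.1 + 1, p.2) - v (p.1 - 1, p.2)) / (2 * h)

/-- Central difference in `y`. -/
noncomputable def dhy (h : ℝ) (v : GridFun M₁ M₂) : GridFun M₁ M₂ :=
  fun p => (v (p.1, p.2 + 1) - v (p.1, p.2 - 1)) / (2 * h)

/-- Second difference in `x`. -/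
noncomputable def dxx (h : ℝ) (v : GridFun M₁ M₂) : GridFun M₁ M₂ :=
  fun p => (v (p.1 + 1, p.2) - 2 * v p + v (p.1 - 1, p.2)) / h ^ 2

/-- Second difference in `y`. -/
noncomputable def dyy (h : ℝ) (v : GridFun M₁ M₂) : GridFun M₁ M₂ :=
  fun p => (v (p.1, p.2 + 1) - 2 * v p + v (p.1, p.2 - 1)) / h ^ 2

/-- Combined central difference `δ̂h = δ̂x + δ̂y`. -/
noncomputable def dhath (h : ℝ) (v : GridFun M₁ M₂) : GridFun M₁ M₂ :=
  fun p => dhx h v p + dhy h v p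

/-- Discrete H¹ seminorm. -/
noncomputable def snorm1 [NeZero M₁] [NeZero M₂] (h : ℝ) (v : GridFun M₁ M₂) : ℝ :=
  Real.sqrt (gnorm h (dx h v) ^ 2 + gnorm h (dy h v) ^ 2)

/-- Bilinear operator `ψx(u,v) = (1/3)(u δ̂x v + δ̂x (u v))`. -/
noncomputable def psix (h : ℝ) (u v : GridFun M₁ M₂) : GridFun M₁ M₂ :=
  fun p => (1 / 3 : ℝ) * (u p * dhx h v p + dhx h (fun q => u q * v q) p)

/-- Bilinear operator `ψy(u,v) = (1/3)(u δ̂y v + δ̂y (u v))`. -/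
noncomputable def psiy (h : ℝ) (u v : GridFun M₁ M₂) : GridFun M₁ M₂ :=
  fun p => (1 / 3 : ℝ) * (u p * dhy h v p + dhy h (fun q => u q * v q) p)

/-- Bilinear operator `ψh(u,v) = (1/3)(u δ̂h v + δ̂h (u v))`. -/
noncomputable def psih (h : ℝ) (u v : GridFun M₁ M₂) : GridFun M₁ M₂ :=
  fun p => (1 / 3 : ℝ) * (u p * dhath h v p + dhath h (fun q => u q * v q) p)

lemma shift1 {M : ℕ} [NeZero M] (g : ZMod M → ℝ) : ∑ a : ZMod M, g (a+1) = ∑ a : ZMod M, g a :=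
  Fintype.sum_equiv (Equiv.addRight 1) _ _ (fun _ => rfl)

lemma shift2 {M : ℕ} [NeZero M] (g : ZMod M → ℝ) : ∑ a : ZMod M, g (a-1) = ∑ a : ZMod M, g a :=
  Fintype.sum_equiv (Equiv.subRight 1) _ _ (fun _ => rfl)

lemma key1 {M : ℕ} [NeZero M] (u v : ZMod M → ℝ) :
    ∑ a : ZMod M, (u a * (v (a+1) - v (a-1)) + (u (a+1) * v (a+1) - u (a-1) * v (a-1))) * v a = 0 := by
  have e1 : ∑ a : ZMod M, u (a+1) * v (a+1) * v a = ∑ a : ZMod M, u a * v (a-1) * v a := by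
    have := shift1 (fun a => u a * v (a-1) * v a)
    simp only [add_sub_cancel_right] at this
    rw [← this]
    exact Finset.sum_congr rfl fun a _ => by ring
  have e2 : ∑ a : ZMod M, u (a-1) * v (a-1) * v a = ∑ a : ZMod M, u a * v (a+1) * v a := by
    have := shift2 (fun a => u a * v (a+1) * v a)
    simp only [sub_add_cancel] at this
    rw [← this]
    exact Finset.sum_congr rfl fun a _ => by ring
  have expand : ∀ a : ZMod M, (u a * (v (a+1) - v (a-1)) + (u (a+1) * v (a+1) - u (a-1) * v (a-1))) * v a
      = (u a * v (a+1) * v a - u a * v (a-1) * v a) + (u (a+1) * v (a+1) * v a - u (a-1) * v (a-1) * v a) := by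
    intro a; ring
  simp only [expand, Finset.sum_add_distrib, Finset.sum_sub_distrib, e1, e2]
  ring

lemma key2 {M : ℕ} [NeZero M] (u v : ZMod M → ℝ) (h : ℝ) :
    ∑ a : ZMod M, (1 / 3 : ℝ) * (u a * ((v (a+1) - v (a-1)) / (2 * h))
      + (u (a+1) * v (a+1) - u (a-1) * v (a-1)) / (2 * h)) * v a = 0 := by
  have hpt : ∀ a : ZMod M, (1 / 3 : ℝ) * (u a * ((v (a+1) - v (a-1)) / (2 * h))
      + (u (a+1) * v (a+1) - u (a-1) * v (a-1)) / (2 * h)) * v a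
      = (1 / 3 / (2 * h)) * ((u a * (v (a+1) - v (a-1))
        + (u (a+1) * v (a+1) - u (a-1) * v (a-1))) * v a) := by
    intro a; ring
  simp only [hpt, ← Finset.mul_sum, key1, mul_zero]

/-- Skew-symmetry of the convective bilinear forms. -/
theorem psi_skew [NeZero M₁] [NeZero M₂] (h : ℝ) (hh : 0 < h)
    (u v : GridFun M₁ M₂) :
    gip h (psix h u v) v = 0 ∧ gip h (psiy h u v) v = 0 ∧ gip h (psih h u v) v = 0 := by
  have hx : gip h (psix h u v) v = 0 := by
    unfold gip psix dhx
    rw [Finset.sum_comm]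
    have hz : ∀ b : ZMod M₂, ∑ a : ZMod M₁,
        (1 / 3 : ℝ) * (u (a, b) * ((v (a + 1, b) - v (a - 1, b)) / (2 * h))
          + (u (a + 1, b) * v (a + 1, b) - u (a - 1, b) * v (a - 1, b)) / (2 * h)) * v (a, b) = 0 :=
      fun b => key2 (fun a => u (a, b)) (fun a => v (a, b)) h
    simp only [hz, Finset.sum_const_zero, mul_zero]
  have hy : gip h (psiy h u v) v = 0 := by
    unfold gip psiy dhy
    have hz : ∀ a : ZMod M₁, ∑ b : ZMod M₂,
        (1 / 3 : ℝ) * (u (a, b) * ((v (a, b + 1) - v (a, b - 1)) / (2 * h))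
          + (u (a, b + 1) * v (a, b + 1) - u (a, b - 1) * v (a, b - 1)) / (2 * h)) * v (a, b) = 0 :=
      fun a => key2 (fun b => u (a, b)) (fun b => v (a, b)) h
    simp only [hz, Finset.sum_const_zero, mul_zero]
  refine ⟨hx, hy, ?_⟩
  have hsplit : gip h (psih h u v) v = gip h (psix h u v) v + gip h (psiy h u v) v := by
    unfold gip psih psix psiy dhath
    rw [← mul_add, ← Finset.sum_add_distrib]
    congr 1
    refine Finset.sum_congr rfl fun a _ => ?_
    rw [← Finset.sum_add_distrib]
    refine Finset.sum_congr rfl fun b _ => ?_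
    ring
  rw [hsplit, hx, hy, add_zero]
end

section
/- Discrete energy inequality for the compact scheme: suppose u, v, w, S, T are periodic grid functions on the M₁×M₂ periodic grid with step size h > 0 satisfying, at every grid point, v = δxx u − (h²/12)·δxx v + S and w = δyy u − (h²/12)·δyy w + T. Then ⟨v + w, u⟩ ≤ −|u|₁² − (h²/18)·(‖v‖² + ‖w‖²) + (h²/12)·⟨v, S⟩ + (h²/12)·⟨w, T⟩ + ⟨u, S + T⟩. -/
open Real Finset Asymptotics

variable {M₁ M₂ : ℕ}

section EnergyAux

variable [NeZero M₁] [NeZero M₂]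

lemma gip_eq (h : ℝ) (u v : GridFun M₁ M₂) :
    gip h u v = h ^ 2 * ∑ p : ZMod M₁ × ZMod M₂, u p * v p := by
  rw [gip, Fintype.sum_prod_type]

lemma sum_shift_x (f : GridFun M₁ M₂) :
    ∑ p : ZMod M₁ × ZMod M₂, f (p.1 + 1, p.2) = ∑ p, f p :=
  Fintype.sum_equiv ((Equiv.addRight (1 : ZMod M₁)).prodCongr (Equiv.refl (ZMod M₂)))
    _ _ (fun p => by cases p; rfl)

lemma sum_shift_y (f : GridFun M₁ M₂) :
    ∑ p : ZMod M₁ × ZMod M₂, f (p.1, p.2 + 1) = ∑ p, f p :=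
  Fintype.sum_equiv ((Equiv.refl (ZMod M₁)).prodCongr (Equiv.addRight (1 : ZMod M₂)))
    _ _ (fun p => by cases p; rfl)

lemma gip_comm (h : ℝ) (u v : GridFun M₁ M₂) : gip h u v = gip h v u := by
  simp only [gip_eq]
  congr 1
  exact Finset.sum_congr rfl fun p _ => mul_comm _ _

lemma gip_split (h c : ℝ) (A B C φ : GridFun M₁ M₂) :
    gip h (fun p => A p - c * B p + C p) φ = gip h A φ - c * gip h B φ + gip h C φ := by
  simp only [gip_eq, add_mul, sub_mul, Finset.sum_add_distrib, Finset.sum_sub_distrib,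
    mul_assoc, ← Finset.mul_sum]
  ring

lemma gip_split2 (h c : ℝ) (A B C φ : GridFun M₁ M₂) :
    gip h (fun p => A p + c * B p - C p) φ = gip h A φ + c * gip h B φ - gip h C φ := by
  simp only [gip_eq, add_mul, sub_mul, Finset.sum_add_distrib, Finset.sum_sub_distrib,
    mul_assoc, ← Finset.mul_sum]
  ring

lemma gip_add_left (h : ℝ) (A B φ : GridFun M₁ M₂) :
    gip h (fun p => A p + B p) φ = gip h A φ + gip h B φ := by
  simp only [gip_eq, add_mul, Finset.sum_add_distrib]
  ring

lemma raw_x (u φ : GridFun M₁ M₂) :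
    ∑ p : ZMod M₁ × ZMod M₂, (u (p.1 + 1, p.2) - 2 * u p + u (p.1 - 1, p.2)) * φ p
      = -∑ p : ZMod M₁ × ZMod M₂, (u (p.1 + 1, p.2) - u p) * (φ (p.1 + 1, p.2) - φ p) := by
  have h1 : ∑ p : ZMod M₁ × ZMod M₂, u (p.1 + 1, p.2) * φ (p.1 + 1, p.2)
      = ∑ p, u p * φ p := sum_shift_x (fun p => u p * φ p)
  have h2 : ∑ p : ZMod M₁ × ZMod M₂, u p * φ (p.1 + 1, p.2)
      = ∑ p, u (p.1 - 1, p.2) * φ p := by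
    have := sum_shift_x (fun p => u (p.1 - 1, p.2) * φ p)
    simpa using this
  simp only [sub_mul, add_mul, mul_sub, two_mul, Finset.sum_sub_distrib, Finset.sum_add_distrib]
  linarith

lemma raw_y (u φ : GridFun M₁ M₂) :
    ∑ p : ZMod M₁ × ZMod M₂, (u (p.1, p.2 + 1) - 2 * u p + u (p.1, p.2 - 1)) * φ p
      = -∑ p : ZMod M₁ × ZMod M₂, (u (p.1, p.2 + 1) - u p) * (φ (p.1, p.2 + 1) - φ p) := by
  have h1 : ∑ p : ZMod M₁ × ZMod M₂, u (p.1, p.2 + 1) * φ (p.1, p.2 + 1)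
      = ∑ p, u p * φ p := sum_shift_y (fun p => u p * φ p)
  have h2 : ∑ p : ZMod M₁ × ZMod M₂, u p * φ (p.1, p.2 + 1)
      = ∑ p, u (p.1, p.2 - 1) * φ p := by
    have := sum_shift_y (fun p => u (p.1, p.2 - 1) * φ p)
    simpa using this
  simp only [sub_mul, add_mul, mul_sub, two_mul, Finset.sum_sub_distrib, Finset.sum_add_distrib]
  linarith

lemma gip_dxx (h : ℝ) (u φ : GridFun M₁ M₂) :
    gip h (dxx h u) φ = -gip h (dx h u) (dx h φ) := by
  simp only [gip_eq, dxx, dx]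
  have l : ∑ p : ZMod M₁ × ZMod M₂, (u (p.1 + 1, p.2) - 2 * u p + u (p.1 - 1, p.2)) / h ^ 2 * φ p
      = (1 / h ^ 2) * ∑ p : ZMod M₁ × ZMod M₂, (u (p.1 + 1, p.2) - 2 * u p + u (p.1 - 1, p.2)) * φ p := by
    rw [Finset.mul_sum]; exact Finset.sum_congr rfl fun p _ => by ring
  have r : ∑ p : ZMod M₁ × ZMod M₂, (u (p.1 + 1, p.2) - u p) / h * ((φ (p.1 + 1, p.2) - φ p) / h)
      = (1 / h ^ 2) * ∑ p : ZMod M₁ × ZMod M₂, (u (p.1 + 1, p.2) - u p) * (φ (p.1 + 1, p.2) - φ p) := by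
    rw [Finset.mul_sum]; exact Finset.sum_congr rfl fun p _ => by ring
  rw [l, r, raw_x]; ring

lemma gip_dyy (h : ℝ) (u φ : GridFun M₁ M₂) :
    gip h (dyy h u) φ = -gip h (dy h u) (dy h φ) := by
  simp only [gip_eq, dyy, dy]
  have l : ∑ p : ZMod M₁ × ZMod M₂, (u (p.1, p.2 + 1) - 2 * u p + u (p.1, p.2 - 1)) / h ^ 2 * φ p
      = (1 / h ^ 2) * ∑ p : ZMod M₁ × ZMod M₂, (u (p.1, p.2 + 1) - 2 * u p + u (p.1, p.2 - 1)) * φ p := by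
    rw [Finset.mul_sum]; exact Finset.sum_congr rfl fun p _ => by ring
  have r : ∑ p : ZMod M₁ × ZMod M₂, (u (p.1, p.2 + 1) - u p) / h * ((φ (p.1, p.2 + 1) - φ p) / h)
      = (1 / h ^ 2) * ∑ p : ZMod M₁ × ZMod M₂, (u (p.1, p.2 + 1) - u p) * (φ (p.1, p.2 + 1) - φ p) := by
    rw [Finset.mul_sum]; exact Finset.sum_congr rfl fun p _ => by ring
  rw [l, r, raw_y]; ring

lemma gip_dx_le (h : ℝ) (hh : 0 < h) (v : GridFun M₁ M₂) :
    gip h (dx h v) (dx h v) ≤ 4 / h ^ 2 * gip h v v := by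
  have h1 : ∑ p : ZMod M₁ × ZMod M₂, v (p.1 + 1, p.2) * v (p.1 + 1, p.2)
      = ∑ p, v p * v p := sum_shift_x (fun p => v p * v p)
  simp only [gip_eq, dx]
  have r : ∑ p : ZMod M₁ × ZMod M₂, (v (p.1 + 1, p.2) - v p) / h * ((v (p.1 + 1, p.2) - v p) / h)
      = (1 / h ^ 2) * ∑ p : ZMod M₁ × ZMod M₂, (v (p.1 + 1, p.2) - v p) * (v (p.1 + 1, p.2) - v p) := by
    rw [Finset.mul_sum]; exact Finset.sum_congr rfl fun p _ => by ring
  rw [r]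
  have step : ∑ p : ZMod M₁ × ZMod M₂, (v (p.1 + 1, p.2) - v p) * (v (p.1 + 1, p.2) - v p)
      ≤ 4 * ∑ p, v p * v p := by
    have hb : ∀ p : ZMod M₁ × ZMod M₂, (v (p.1 + 1, p.2) - v p) * (v (p.1 + 1, p.2) - v p)
        ≤ 2 * (v (p.1 + 1, p.2) * v (p.1 + 1, p.2)) + 2 * (v p * v p) := by
      intro p; nlinarith [sq_nonneg (v (p.1 + 1, p.2) + v p)]
    calc ∑ p : ZMod M₁ × ZMod M₂, (v (p.1 + 1, p.2) - v p) * (v (p.1 + 1, p.2) - v p)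
        ≤ ∑ p : ZMod M₁ × ZMod M₂, (2 * (v (p.1 + 1, p.2) * v (p.1 + 1, p.2)) + 2 * (v p * v p)) :=
          Finset.sum_le_sum fun p _ => hb p
      _ = 2 * ∑ p : ZMod M₁ × ZMod M₂, v (p.1 + 1, p.2) * v (p.1 + 1, p.2)
            + 2 * ∑ p : ZMod M₁ × ZMod M₂, v p * v p := by
          rw [Finset.sum_add_distrib, ← Finset.mul_sum, ← Finset.mul_sum]
      _ = 4 * ∑ p : ZMod M₁ × ZMod M₂, v p * v p := by rw [h1]; ring
  have hh2 : (0:ℝ) < h ^ 2 := by positivity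
  calc h ^ 2 * (1 / h ^ 2 * ∑ p : ZMod M₁ × ZMod M₂, (v (p.1 + 1, p.2) - v p) * (v (p.1 + 1, p.2) - v p))
      = ∑ p : ZMod M₁ × ZMod M₂, (v (p.1 + 1, p.2) - v p) * (v (p.1 + 1, p.2) - v p) := by
        field_simp
    _ ≤ 4 * ∑ p : ZMod M₁ × ZMod M₂, v p * v p := step
    _ = 4 / h ^ 2 * (h ^ 2 * ∑ p : ZMod M₁ × ZMod M₂, v p * v p) := by
        rw [← mul_assoc, div_mul_cancel₀ (4:ℝ) (ne_of_gt hh2)]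

lemma gip_dy_le (h : ℝ) (hh : 0 < h) (v : GridFun M₁ M₂) :
    gip h (dy h v) (dy h v) ≤ 4 / h ^ 2 * gip h v v := by
  have h1 : ∑ p : ZMod M₁ × ZMod M₂, v (p.1, p.2 + 1) * v (p.1, p.2 + 1)
      = ∑ p, v p * v p := sum_shift_y (fun p => v p * v p)
  simp only [gip_eq, dy]
  have r : ∑ p : ZMod M₁ × ZMod M₂, (v (p.1, p.2 + 1) - v p) / h * ((v (p.1, p.2 + 1) - v p) / h)
      = (1 / h ^ 2) * ∑ p : ZMod M₁ × ZMod M₂, (v (p.1, p.2 + 1) - v p) * (v (p.1, p.2 + 1) - v p) := by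
    rw [Finset.mul_sum]; exact Finset.sum_congr rfl fun p _ => by ring
  rw [r]
  have step : ∑ p : ZMod M₁ × ZMod M₂, (v (p.1, p.2 + 1) - v p) * (v (p.1, p.2 + 1) - v p)
      ≤ 4 * ∑ p, v p * v p := by
    have hb : ∀ p : ZMod M₁ × ZMod M₂, (v (p.1, p.2 + 1) - v p) * (v (p.1, p.2 + 1) - v p)
        ≤ 2 * (v (p.1, p.2 + 1) * v (p.1, p.2 + 1)) + 2 * (v p * v p) := by
      intro p; nlinarith [sq_nonneg (v (p.1, p.2 + 1) + v p)]
    calc ∑ p : ZMod M₁ × ZMod M₂, (v (p.1, p.2 + 1) - v p) * (v (p.1, p.2 + 1) - v p)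
        ≤ ∑ p : ZMod M₁ × ZMod M₂, (2 * (v (p.1, p.2 + 1) * v (p.1, p.2 + 1)) + 2 * (v p * v p)) :=
          Finset.sum_le_sum fun p _ => hb p
      _ = 2 * ∑ p : ZMod M₁ × ZMod M₂, v (p.1, p.2 + 1) * v (p.1, p.2 + 1)
            + 2 * ∑ p : ZMod M₁ × ZMod M₂, v p * v p := by
          rw [Finset.sum_add_distrib, ← Finset.mul_sum, ← Finset.mul_sum]
      _ = 4 * ∑ p : ZMod M₁ × ZMod M₂, v p * v p := by rw [h1]; ring
  have hh2 : (0:ℝ) < h ^ 2 := by positivity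
  calc h ^ 2 * (1 / h ^ 2 * ∑ p : ZMod M₁ × ZMod M₂, (v (p.1, p.2 + 1) - v p) * (v (p.1, p.2 + 1) - v p))
      = ∑ p : ZMod M₁ × ZMod M₂, (v (p.1, p.2 + 1) - v p) * (v (p.1, p.2 + 1) - v p) := by
        field_simp
    _ ≤ 4 * ∑ p : ZMod M₁ × ZMod M₂, v p * v p := step
    _ = 4 / h ^ 2 * (h ^ 2 * ∑ p : ZMod M₁ × ZMod M₂, v p * v p) := by
        rw [← mul_assoc, div_mul_cancel₀ (4:ℝ) (ne_of_gt hh2)]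

lemma gip_self_nonneg (h : ℝ) (v : GridFun M₁ M₂) : 0 ≤ gip h v v := by
  rw [gip_eq]
  exact mul_nonneg (sq_nonneg h) (Finset.sum_nonneg fun p _ => mul_self_nonneg _)

lemma gnorm_sq (h : ℝ) (v : GridFun M₁ M₂) : gnorm h v ^ 2 = gip h v v :=
  Real.sq_sqrt (gip_self_nonneg h v)

end EnergyAux

/-- Discrete energy inequality for the compact scheme. -/
theorem compact_energy_inequality [NeZero M₁] [NeZero M₂] (h : ℝ) (hh : 0 < h)
    (u v w S T : GridFun M₁ M₂)
    (hv : ∀ p, v p = dxx h u p - h ^ 2 / 12 * dxx h v p + S p)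
    (hw : ∀ p, w p = dyy h u p - h ^ 2 / 12 * dyy h w p + T p) :
    gip h (fun p => v p + w p) u ≤
      -(snorm1 h u) ^ 2 - h ^ 2 / 18 * (gnorm h v ^ 2 + gnorm h w ^ 2)
        + h ^ 2 / 12 * gip h v S + h ^ 2 / 12 * gip h w T
        + gip h u (fun p => S p + T p) := by
  have estx : gip h v u ≤ -gip h (dx h u) (dx h u) - h ^ 2 / 18 * gip h v v
      + h ^ 2 / 12 * gip h v S + gip h S u := by
    have E1 : gip h v u = gip h (dxx h u) u - h ^ 2 / 12 * gip h (dxx h v) u + gip h S u := by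
      have hveq : gip h v u = gip h (fun p => dxx h u p - h ^ 2 / 12 * dxx h v p + S p) u := by
        congr 1
        funext p
        exact hv p
      rw [hveq, gip_split]
    have E2 : gip h (dxx h u) u = -gip h (dx h u) (dx h u) := gip_dxx h u u
    have huv : dxx h u = fun p => v p + h ^ 2 / 12 * dxx h v p - S p := by
      funext p; have := hv p; linarith
    have E3 : gip h (dxx h v) u
        = gip h v v - h ^ 2 / 12 * gip h (dx h v) (dx h v) - gip h v S := by
      calc gip h (dxx h v) u = -gip h (dx h v) (dx h u) := gip_dxx h v u
        _ = -gip h (dx h u) (dx h v) := by rw [gip_comm]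
        _ = gip h (dxx h u) v := (gip_dxx h u v).symm
        _ = gip h v v + h ^ 2 / 12 * gip h (dxx h v) v - gip h S v := by rw [huv, gip_split2]
        _ = gip h v v + h ^ 2 / 12 * (-gip h (dx h v) (dx h v)) - gip h v S := by
            rw [gip_dxx h v v, gip_comm h S v]
        _ = gip h v v - h ^ 2 / 12 * gip h (dx h v) (dx h v) - gip h v S := by ring
    have hb1 : h ^ 2 / 12 * (h ^ 2 / 12 * gip h (dx h v) (dx h v)) ≤ h ^ 2 / 36 * gip h v v := by
      have h4 := gip_dx_le h hh v
      have hpos : (0:ℝ) ≤ (h ^ 2 / 12) ^ 2 := sq_nonneg _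
      have hmul := mul_le_mul_of_nonneg_left h4 hpos
      have heq : (h ^ 2 / 12) ^ 2 * (4 / h ^ 2 * gip h v v) = h ^ 2 / 36 * gip h v v := by
        field_simp
        ring
      have heq2 : h ^ 2 / 12 * (h ^ 2 / 12 * gip h (dx h v) (dx h v))
          = (h ^ 2 / 12) ^ 2 * gip h (dx h v) (dx h v) := by ring
      linarith
    rw [E2, E3] at E1
    rw [E1]
    nlinarith [hb1]
  have esty : gip h w u ≤ -gip h (dy h u) (dy h u) - h ^ 2 / 18 * gip h w w
      + h ^ 2 / 12 * gip h w T + gip h T u := by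
    have E1 : gip h w u = gip h (dyy h u) u - h ^ 2 / 12 * gip h (dyy h w) u + gip h T u := by
      have hweq : gip h w u = gip h (fun p => dyy h u p - h ^ 2 / 12 * dyy h w p + T p) u := by
        congr 1
        funext p
        exact hw p
      rw [hweq, gip_split]
    have E2 : gip h (dyy h u) u = -gip h (dy h u) (dy h u) := gip_dyy h u u
    have huw : dyy h u = fun p => w p + h ^ 2 / 12 * dyy h w p - T p := by
      funext p; have := hw p; linarith
    have E3 : gip h (dyy h w) u
        = gip h w w - h ^ 2 / 12 * gip h (dy h w) (dy h w) - gip h w T := by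
      calc gip h (dyy h w) u = -gip h (dy h w) (dy h u) := gip_dyy h w u
        _ = -gip h (dy h u) (dy h w) := by rw [gip_comm]
        _ = gip h (dyy h u) w := (gip_dyy h u w).symm
        _ = gip h w w + h ^ 2 / 12 * gip h (dyy h w) w - gip h T w := by rw [huw, gip_split2]
        _ = gip h w w + h ^ 2 / 12 * (-gip h (dy h w) (dy h w)) - gip h w T := by
            rw [gip_dyy h w w, gip_comm h T w]
        _ = gip h w w - h ^ 2 / 12 * gip h (dy h w) (dy h w) - gip h w T := by ring
    have hb1 : h ^ 2 / 12 * (h ^ 2 / 12 * gip h (dy h w) (dy h w)) ≤ h ^ 2 / 36 * gip h w w := by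
      have h4 := gip_dy_le h hh w
      have hpos : (0:ℝ) ≤ (h ^ 2 / 12) ^ 2 := sq_nonneg _
      have hmul := mul_le_mul_of_nonneg_left h4 hpos
      have heq : (h ^ 2 / 12) ^ 2 * (4 / h ^ 2 * gip h w w) = h ^ 2 / 36 * gip h w w := by
        field_simp
        ring
      have heq2 : h ^ 2 / 12 * (h ^ 2 / 12 * gip h (dy h w) (dy h w))
          = (h ^ 2 / 12) ^ 2 * gip h (dy h w) (dy h w) := by ring
      linarith
    rw [E2, E3] at E1
    rw [E1]
    nlinarith [hb1]
  have hLHS : gip h (fun p => v p + w p) u = gip h v u + gip h w u := gip_add_left h v w u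
  have hsn : snorm1 h u ^ 2 = gip h (dx h u) (dx h u) + gip h (dy h u) (dy h u) := by
    rw [snorm1, Real.sq_sqrt (by positivity), gnorm_sq, gnorm_sq]
  have hgv : gnorm h v ^ 2 = gip h v v := gnorm_sq h v
  have hgw : gnorm h w ^ 2 = gip h w w := gnorm_sq h w
  have hST : gip h u (fun p => S p + T p) = gip h S u + gip h T u := by
    rw [gip_comm, gip_add_left]
  rw [hLHS, hsn, hgv, hgw, hST]
  linarith [estx, esty]
end

section
/- Coercivity of the compact averaging operator: for every periodic grid function v on the M₁×M₂ periodic grid with step size h > 0, ‖v + (h²/12)·δxx v‖ ≥ (2/3)·‖v‖, and likewise ‖v + (h²/12)·δyy v‖ ≥ (2/3)·‖v‖. (Equivalently, the operator I + (h²/12)δxx is invertible with inverse of spectral norm at most 3/2.) -/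
open Real Finset Asymptotics

variable {M₁ M₂ : ℕ}

/-- View a grid function as an element of Euclidean space. -/
noncomputable def toE (w : GridFun M₁ M₂) : EuclideanSpace ℝ (ZMod M₁ × ZMod M₂) := WithLp.toLp 2 w

lemma gnorm_eq_toE [NeZero M₁] [NeZero M₂] (h : ℝ) (hh : 0 < h) (w : GridFun M₁ M₂) :
    gnorm h w = h * ‖toE w‖ := by
  rw [gnorm, gip, EuclideanSpace.norm_eq]
  rw [show (∑ a : ZMod M₁, ∑ b : ZMod M₂, w (a, b) * w (a, b))
      = ∑ p : ZMod M₁ × ZMod M₂, ‖toE w p‖ ^ 2 by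
    rw [Fintype.sum_prod_type]
    exact Finset.sum_congr rfl fun a _ => Finset.sum_congr rfl fun b _ => by
      simp [toE, Real.norm_eq_abs, sq_abs, sq]]
  rw [Real.sqrt_mul (by positivity), Real.sqrt_sq hh.le]

lemma shiftx_norm [NeZero M₁] [NeZero M₂] (w : GridFun M₁ M₂) (c : ZMod M₁) :
    ‖toE (fun p => w (p.1 + c, p.2))‖ = ‖toE w‖ := by
  rw [EuclideanSpace.norm_eq, EuclideanSpace.norm_eq]
  congr 1
  exact Fintype.sum_equiv ((Equiv.addRight c).prodCongr (Equiv.refl (ZMod M₂)))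
    _ _ (fun p => rfl)

lemma shifty_norm [NeZero M₁] [NeZero M₂] (w : GridFun M₁ M₂) (c : ZMod M₂) :
    ‖toE (fun p => w (p.1, p.2 + c))‖ = ‖toE w‖ := by
  rw [EuclideanSpace.norm_eq, EuclideanSpace.norm_eq]
  congr 1
  exact Fintype.sum_equiv ((Equiv.refl (ZMod M₁)).prodCongr (Equiv.addRight c))
    _ _ (fun p => rfl)

lemma key_bound [NeZero M₁] [NeZero M₂]
    (w vp vm : EuclideanSpace ℝ (ZMod M₁ × ZMod M₂)) (v : EuclideanSpace ℝ (ZMod M₁ × ZMod M₂))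
    (hw : w = (5/6 : ℝ) • v + ((1/12 : ℝ) • vp + (1/12 : ℝ) • vm))
    (hp : ‖vp‖ = ‖v‖) (hm : ‖vm‖ = ‖v‖) :
    2 / 3 * ‖v‖ ≤ ‖w‖ := by
  have h1 : ‖(5/6 : ℝ) • v‖ ≤ ‖w‖ + ‖(1/12 : ℝ) • vp + (1/12 : ℝ) • vm‖ := by
    calc ‖(5/6 : ℝ) • v‖ = ‖w - ((1/12 : ℝ) • vp + (1/12 : ℝ) • vm)‖ := by
          rw [hw, add_sub_cancel_right]
      _ ≤ ‖w‖ + ‖(1/12 : ℝ) • vp + (1/12 : ℝ) • vm‖ := norm_sub_le _ _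
  have h2 : ‖(1/12 : ℝ) • vp + (1/12 : ℝ) • vm‖ ≤ (1/6 : ℝ) * ‖v‖ := by
    calc ‖(1/12 : ℝ) • vp + (1/12 : ℝ) • vm‖ ≤ ‖(1/12 : ℝ) • vp‖ + ‖(1/12 : ℝ) • vm‖ :=
          norm_add_le _ _
      _ = (1/6 : ℝ) * ‖v‖ := by
          rw [norm_smul, norm_smul, hp, hm]; simp [Real.norm_eq_abs]; ring
  have h3 : ‖(5/6 : ℝ) • v‖ = (5/6 : ℝ) * ‖v‖ := by
    rw [norm_smul]; simp [Real.norm_eq_abs]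
  linarith

/-- Coercivity of the compact averaging operator `I + (h²/12) δxx` (and `δyy`). -/
theorem compact_operator_coercive [NeZero M₁] [NeZero M₂] (h : ℝ) (hh : 0 < h)
    (v : GridFun M₁ M₂) :
    2 / 3 * gnorm h v ≤ gnorm h (fun p => v p + h ^ 2 / 12 * dxx h v p) ∧
    2 / 3 * gnorm h v ≤ gnorm h (fun p => v p + h ^ 2 / 12 * dyy h v p) := by
  have hne : (h : ℝ) ^ 2 ≠ 0 := by positivity
  constructor
  · rw [gnorm_eq_toE h hh, gnorm_eq_toE h hh]
    have hkey : 2/3 * ‖toE v‖ ≤ ‖toE (fun p => v p + h ^ 2 / 12 * dxx h v p)‖ := by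
      apply key_bound _ (toE (fun p => v (p.1 + 1, p.2))) (toE (fun p => v (p.1 + (-1), p.2)))
        (toE v)
      · ext p
        show v p + h ^ 2 / 12 * dxx h v p = (5/6 : ℝ) * v p +
          ((1/12 : ℝ) * v (p.1 + 1, p.2) + (1/12 : ℝ) * v (p.1 + (-1), p.2))
        rw [dxx]
        have : p.1 + (-1) = p.1 - 1 := by ring
        rw [this]
        field_simp
        ring
      · exact shiftx_norm v 1
      · exact shiftx_norm v (-1)
    nlinarith [norm_nonneg (toE v),
      norm_nonneg (toE (fun p => v p + h ^ 2 / 12 * dxx h v p))]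
  · rw [gnorm_eq_toE h hh, gnorm_eq_toE h hh]
    have hkey : 2/3 * ‖toE v‖ ≤ ‖toE (fun p => v p + h ^ 2 / 12 * dyy h v p)‖ := by
      apply key_bound _ (toE (fun p => v (p.1, p.2 + 1))) (toE (fun p => v (p.1, p.2 + (-1))))
        (toE v)
      · ext p
        show v p + h ^ 2 / 12 * dyy h v p = (5/6 : ℝ) * v p +
          ((1/12 : ℝ) * v (p.1, p.2 + 1) + (1/12 : ℝ) * v (p.1, p.2 + (-1)))
        rw [dyy]
        have : p.2 + (-1) = p.2 - 1 := by ring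
        rw [this]
        field_simp
        ring
      · exact shifty_norm v 1
      · exact shifty_norm v (-1)
    nlinarith [norm_nonneg (toE v),
      norm_nonneg (toE (fun p => v p + h ^ 2 / 12 * dyy h v p))]
end

section
/- The homogeneous fine-grid linearized compact system has only the trivial solution: let τ > 0, λ > 0, let a, b, c be arbitrary fixed periodic grid functions on the M₁×M₂ periodic grid with step size h > 0, and suppose periodic grid functions u, v, w satisfy, at every grid point, (1/τ)·u + (1/2)·ψh(a, u) − (h²/4)·(ψx(b, u) + ψy(c, u)) = (λ/2)·(v + w), together with v = δxx u − (h²/12)·δxx v and w = δyy u − (h²/12)·δyy w. Then u = 0, v = 0, and w = 0. -/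
open Real Finset Asymptotics

variable {M₁ M₂ : ℕ}

section Aux
variable [NeZero M₁] [NeZero M₂]

lemma shift_x (f : GridFun M₁ M₂) :
    ∑ p : ZMod M₁ × ZMod M₂, f (p.1 + 1, p.2) = ∑ p : ZMod M₁ × ZMod M₂, f p :=
  Fintype.sum_equiv ((Equiv.addRight (1 : ZMod M₁)).prodCongr (Equiv.refl (ZMod M₂)))
    _ _ (fun p => rfl)

lemma shift_y (f : GridFun M₁ M₂) :
    ∑ p : ZMod M₁ × ZMod M₂, f (p.1, p.2 + 1) = ∑ p : ZMod M₁ × ZMod M₂, f p :=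
  Fintype.sum_equiv ((Equiv.refl (ZMod M₁)).prodCongr (Equiv.addRight (1 : ZMod M₂)))
    _ _ (fun p => rfl)

lemma pair_x (f g : GridFun M₁ M₂) :
    ∑ p : ZMod M₁ × ZMod M₂, f (p.1 + 1, p.2) * g p
      = ∑ p : ZMod M₁ × ZMod M₂, f p * g (p.1 - 1, p.2) := by
  have := shift_x (fun p => f p * g (p.1 - 1, p.2)); simpa using this

lemma pair_x' (f g : GridFun M₁ M₂) :
    ∑ p : ZMod M₁ × ZMod M₂, f (p.1 - 1, p.2) * g p
      = ∑ p : ZMod M₁ × ZMod M₂, f p * g (p.1 + 1, p.2) := by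
  have := (pair_x g f).symm
  calc ∑ p : ZMod M₁ × ZMod M₂, f (p.1 - 1, p.2) * g p
      = ∑ p : ZMod M₁ × ZMod M₂, g p * f (p.1 - 1, p.2) := by
        exact Finset.sum_congr rfl fun p _ => mul_comm _ _
    _ = ∑ p : ZMod M₁ × ZMod M₂, g (p.1 + 1, p.2) * f p := this
    _ = ∑ p : ZMod M₁ × ZMod M₂, f p * g (p.1 + 1, p.2) := by
        exact Finset.sum_congr rfl fun p _ => mul_comm _ _

lemma pair_y (f g : GridFun M₁ M₂) :
    ∑ p : ZMod M₁ × ZMod M₂, f (p.1, p.2 + 1) * g p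
      = ∑ p : ZMod M₁ × ZMod M₂, f p * g (p.1, p.2 - 1) := by
  have := shift_y (fun p => f p * g (p.1, p.2 - 1)); simpa using this

lemma pair_y' (f g : GridFun M₁ M₂) :
    ∑ p : ZMod M₁ × ZMod M₂, f (p.1, p.2 - 1) * g p
      = ∑ p : ZMod M₁ × ZMod M₂, f p * g (p.1, p.2 + 1) := by
  have := (pair_y g f).symm
  calc ∑ p : ZMod M₁ × ZMod M₂, f (p.1, p.2 - 1) * g p
      = ∑ p : ZMod M₁ × ZMod M₂, g p * f (p.1, p.2 - 1) := by
        exact Finset.sum_congr rfl fun p _ => mul_comm _ _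
    _ = ∑ p : ZMod M₁ × ZMod M₂, g (p.1, p.2 + 1) * f p := this
    _ = ∑ p : ZMod M₁ × ZMod M₂, f p * g (p.1, p.2 + 1) := by
        exact Finset.sum_congr rfl fun p _ => mul_comm _ _

lemma skew_dhx (h : ℝ) (f g : GridFun M₁ M₂) :
    ∑ p : ZMod M₁ × ZMod M₂, dhx h f p * g p
      = -∑ p : ZMod M₁ × ZMod M₂, f p * dhx h g p := by
  have e1 : ∀ p : ZMod M₁ × ZMod M₂, dhx h f p * g p
      = (f (p.1 + 1, p.2) * g p) / (2 * h) - (f (p.1 - 1, p.2) * g p) / (2 * h) := by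
    intro p; simp only [dhx]; ring
  have e2 : ∀ p : ZMod M₁ × ZMod M₂, f p * dhx h g p
      = (f p * g (p.1 + 1, p.2)) / (2 * h) - (f p * g (p.1 - 1, p.2)) / (2 * h) := by
    intro p; simp only [dhx]; ring
  rw [Finset.sum_congr rfl fun p _ => e1 p, Finset.sum_congr rfl fun p _ => e2 p,
    Finset.sum_sub_distrib, Finset.sum_sub_distrib, ← Finset.sum_div, ← Finset.sum_div,
    ← Finset.sum_div, ← Finset.sum_div, pair_x, pair_x']
  ring

lemma skew_dhy (h : ℝ) (f g : GridFun M₁ M₂) :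
    ∑ p : ZMod M₁ × ZMod M₂, dhy h f p * g p
      = -∑ p : ZMod M₁ × ZMod M₂, f p * dhy h g p := by
  have e1 : ∀ p : ZMod M₁ × ZMod M₂, dhy h f p * g p
      = (f (p.1, p.2 + 1) * g p) / (2 * h) - (f (p.1, p.2 - 1) * g p) / (2 * h) := by
    intro p; simp only [dhy]; ring
  have e2 : ∀ p : ZMod M₁ × ZMod M₂, f p * dhy h g p
      = (f p * g (p.1, p.2 + 1)) / (2 * h) - (f p * g (p.1, p.2 - 1)) / (2 * h) := by
    intro p; simp only [dhy]; ring
  rw [Finset.sum_congr rfl fun p _ => e1 p, Finset.sum_congr rfl fun p _ => e2 p,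
    Finset.sum_sub_distrib, Finset.sum_sub_distrib, ← Finset.sum_div, ← Finset.sum_div,
    ← Finset.sum_div, ← Finset.sum_div, pair_y, pair_y']
  ring

lemma parts_dxx (h : ℝ) (f g : GridFun M₁ M₂) :
    ∑ p : ZMod M₁ × ZMod M₂, dxx h f p * g p
      = -∑ p : ZMod M₁ × ZMod M₂, dx h f p * dx h g p := by
  have e1 : ∀ p : ZMod M₁ × ZMod M₂, dxx h f p * g p
      = (f (p.1 + 1, p.2) * g p) / h ^ 2 + (f (p.1 - 1, p.2) * g p) / h ^ 2
        - (2 * (f p * g p)) / h ^ 2 := by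
    intro p; simp only [dxx]; ring
  have e2 : ∀ p : ZMod M₁ × ZMod M₂, dx h f p * dx h g p
      = ((fun q => f q * g q) (p.1 + 1, p.2)) / h ^ 2 + (f p * g p) / h ^ 2
        - (f (p.1 + 1, p.2) * g p) / h ^ 2 - (f p * g (p.1 + 1, p.2)) / h ^ 2 := by
    intro p; simp only [dx]; field_simp; ring
  rw [Finset.sum_congr rfl fun p _ => e1 p, Finset.sum_congr rfl fun p _ => e2 p]
  rw [Finset.sum_sub_distrib, Finset.sum_add_distrib,
      Finset.sum_sub_distrib, Finset.sum_sub_distrib, Finset.sum_add_distrib]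
  rw [← Finset.sum_div, ← Finset.sum_div, ← Finset.sum_div, ← Finset.sum_div,
      ← Finset.sum_div, ← Finset.sum_div, pair_x f g, pair_x' f g,
      shift_x (fun q => f q * g q), ← Finset.mul_sum]
  ring

lemma parts_dyy (h : ℝ) (f g : GridFun M₁ M₂) :
    ∑ p : ZMod M₁ × ZMod M₂, dyy h f p * g p
      = -∑ p : ZMod M₁ × ZMod M₂, dy h f p * dy h g p := by
  have e1 : ∀ p : ZMod M₁ × ZMod M₂, dyy h f p * g p
      = (f (p.1, p.2 + 1) * g p) / h ^ 2 + (f (p.1, p.2 - 1) * g p) / h ^ 2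
        - (2 * (f p * g p)) / h ^ 2 := by
    intro p; simp only [dyy]; ring
  have e2 : ∀ p : ZMod M₁ × ZMod M₂, dy h f p * dy h g p
      = ((fun q => f q * g q) (p.1, p.2 + 1)) / h ^ 2 + (f p * g p) / h ^ 2
        - (f (p.1, p.2 + 1) * g p) / h ^ 2 - (f p * g (p.1, p.2 + 1)) / h ^ 2 := by
    intro p; simp only [dy]; field_simp; ring
  rw [Finset.sum_congr rfl fun p _ => e1 p, Finset.sum_congr rfl fun p _ => e2 p]
  rw [Finset.sum_sub_distrib, Finset.sum_add_distrib,
      Finset.sum_sub_distrib, Finset.sum_sub_distrib, Finset.sum_add_distrib]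
  rw [← Finset.sum_div, ← Finset.sum_div, ← Finset.sum_div, ← Finset.sum_div,
      ← Finset.sum_div, ← Finset.sum_div, pair_y f g, pair_y' f g,
      shift_y (fun q => f q * g q), ← Finset.mul_sum]
  ring

lemma inv_est_x (h : ℝ) (hh : 0 < h) (v : GridFun M₁ M₂) :
    ∑ p : ZMod M₁ × ZMod M₂, dx h v p * dx h v p
      ≤ 4 / h ^ 2 * ∑ p : ZMod M₁ × ZMod M₂, v p * v p := by
  have h2 : (0:ℝ) < h ^ 2 := by positivity
  have step : ∀ p : ZMod M₁ × ZMod M₂, dx h v p * dx h v p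
      ≤ (2 * (v (p.1 + 1, p.2) * v (p.1 + 1, p.2)) + 2 * (v p * v p)) / h ^ 2 := by
    intro p
    have e : dx h v p * dx h v p = (v (p.1 + 1, p.2) - v p) ^ 2 / h ^ 2 := by
      simp only [dx]; ring
    rw [e]
    apply div_le_div_of_nonneg_right ?_ h2.le |>.trans_eq rfl
    nlinarith [sq_nonneg (v (p.1 + 1, p.2) + v p)]
  calc ∑ p : ZMod M₁ × ZMod M₂, dx h v p * dx h v p
      ≤ ∑ p : ZMod M₁ × ZMod M₂,
          (2 * (v (p.1 + 1, p.2) * v (p.1 + 1, p.2)) + 2 * (v p * v p)) / h ^ 2 :=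
        Finset.sum_le_sum fun p _ => step p
    _ = ((∑ p : ZMod M₁ × ZMod M₂, 2 * (v (p.1 + 1, p.2) * v (p.1 + 1, p.2)))
          + ∑ p : ZMod M₁ × ZMod M₂, 2 * (v p * v p)) / h ^ 2 := by
        rw [← Finset.sum_div, Finset.sum_add_distrib]
    _ = 4 / h ^ 2 * ∑ p : ZMod M₁ × ZMod M₂, v p * v p := by
        rw [← Finset.mul_sum, ← Finset.mul_sum,
          shift_x (fun q => v q * v q)]
        ring

lemma inv_est_y (h : ℝ) (hh : 0 < h) (v : GridFun M₁ M₂) :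
    ∑ p : ZMod M₁ × ZMod M₂, dy h v p * dy h v p
      ≤ 4 / h ^ 2 * ∑ p : ZMod M₁ × ZMod M₂, v p * v p := by
  have h2 : (0:ℝ) < h ^ 2 := by positivity
  have step : ∀ p : ZMod M₁ × ZMod M₂, dy h v p * dy h v p
      ≤ (2 * (v (p.1, p.2 + 1) * v (p.1, p.2 + 1)) + 2 * (v p * v p)) / h ^ 2 := by
    intro p
    have e : dy h v p * dy h v p = (v (p.1, p.2 + 1) - v p) ^ 2 / h ^ 2 := by
      simp only [dy]; ring
    rw [e]
    apply div_le_div_of_nonneg_right ?_ h2.le |>.trans_eq rfl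
    nlinarith [sq_nonneg (v (p.1, p.2 + 1) + v p)]
  calc ∑ p : ZMod M₁ × ZMod M₂, dy h v p * dy h v p
      ≤ ∑ p : ZMod M₁ × ZMod M₂,
          (2 * (v (p.1, p.2 + 1) * v (p.1, p.2 + 1)) + 2 * (v p * v p)) / h ^ 2 :=
        Finset.sum_le_sum fun p _ => step p
    _ = ((∑ p : ZMod M₁ × ZMod M₂, 2 * (v (p.1, p.2 + 1) * v (p.1, p.2 + 1)))
          + ∑ p : ZMod M₁ × ZMod M₂, 2 * (v p * v p)) / h ^ 2 := by
        rw [← Finset.sum_div, Finset.sum_add_distrib]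
    _ = 4 / h ^ 2 * ∑ p : ZMod M₁ × ZMod M₂, v p * v p := by
        rw [← Finset.mul_sum, ← Finset.mul_sum,
          shift_y (fun q => v q * v q)]
        ring

lemma skew_dhath (h : ℝ) (f g : GridFun M₁ M₂) :
    ∑ p : ZMod M₁ × ZMod M₂, dhath h f p * g p
      = -∑ p : ZMod M₁ × ZMod M₂, f p * dhath h g p := by
  have e1 : ∀ p : ZMod M₁ × ZMod M₂, dhath h f p * g p
      = dhx h f p * g p + dhy h f p * g p := by intro p; simp only [dhath]; ring
  have e2 : ∀ p : ZMod M₁ × ZMod M₂, f p * dhath h g p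
      = f p * dhx h g p + f p * dhy h g p := by intro p; simp only [dhath]; ring
  rw [Finset.sum_congr rfl fun p _ => e1 p, Finset.sum_congr rfl fun p _ => e2 p,
    Finset.sum_add_distrib, Finset.sum_add_distrib, skew_dhx, skew_dhy]
  ring

lemma psi_sum_zero {Dh : GridFun M₁ M₂ → GridFun M₁ M₂}
    (hsk : ∀ f g : GridFun M₁ M₂, ∑ p : ZMod M₁ × ZMod M₂, Dh f p * g p
      = -∑ p : ZMod M₁ × ZMod M₂, f p * Dh g p)
    (b u : GridFun M₁ M₂) :
    ∑ p : ZMod M₁ × ZMod M₂,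
      (1 / 3 : ℝ) * (b p * Dh u p + Dh (fun q => b q * u q) p) * u p = 0 := by
  have h1 : ∑ p : ZMod M₁ × ZMod M₂, Dh (fun q => b q * u q) p * u p
      = -∑ p : ZMod M₁ × ZMod M₂, (fun q => b q * u q) p * Dh u p := hsk _ _
  have e : ∀ p : ZMod M₁ × ZMod M₂,
      (1 / 3 : ℝ) * (b p * Dh u p + Dh (fun q => b q * u q) p) * u p
        = (1 / 3 : ℝ) * ((fun q => b q * u q) p * Dh u p)
          + (1 / 3 : ℝ) * (Dh (fun q => b q * u q) p * u p) := by
    intro p; simp only; ring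
  rw [Finset.sum_congr rfl fun p _ => e p, Finset.sum_add_distrib,
    ← Finset.mul_sum, ← Finset.mul_sum, h1]
  ring

/-- Key estimate for the compact relation `v = L u - (h²/12) L v`. -/
lemma key_est (h : ℝ) (hh : 0 < h)
    {L D : GridFun M₁ M₂ → GridFun M₁ M₂}
    (parts : ∀ f g : GridFun M₁ M₂, ∑ p : ZMod M₁ × ZMod M₂, L f p * g p
      = -∑ p : ZMod M₁ × ZMod M₂, D f p * D g p)
    (inv : ∀ f : GridFun M₁ M₂, ∑ p : ZMod M₁ × ZMod M₂, D f p * D f p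
      ≤ 4 / h ^ 2 * ∑ p : ZMod M₁ × ZMod M₂, f p * f p)
    (u v : GridFun M₁ M₂) (hv : ∀ p, v p = L u p - h ^ 2 / 12 * L v p) :
    ∑ p : ZMod M₁ × ZMod M₂, v p * u p
      ≤ -(h ^ 2 / 18) * ∑ p : ZMod M₁ × ZMod M₂, v p * v p := by
  have h2 : (0:ℝ) < h ^ 2 := by positivity
  set A := ∑ p : ZMod M₁ × ZMod M₂, D u p * D u p with hA
  set V := ∑ p : ZMod M₁ × ZMod M₂, v p * v p with hV
  set DV := ∑ p : ZMod M₁ × ZMod M₂, D v p * D v p with hDV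
  set C := ∑ p : ZMod M₁ × ZMod M₂, D v p * D u p with hC
  clear_value A V DV C
  have hAnn : 0 ≤ A := by
    rw [hA]; exact Finset.sum_nonneg fun p _ => mul_self_nonneg _
  have hVnn : 0 ≤ V := by
    rw [hV]; exact Finset.sum_nonneg fun p _ => mul_self_nonneg _
  have hDVnn : 0 ≤ DV := by
    rw [hDV]; exact Finset.sum_nonneg fun p _ => mul_self_nonneg _
  have hCC : ∑ p : ZMod M₁ × ZMod M₂, D u p * D v p = C := by
    rw [hC]; exact Finset.sum_congr rfl fun p _ => mul_comm _ _
  have e_vu : ∑ p : ZMod M₁ × ZMod M₂, v p * u p = -A + h ^ 2 / 12 * C := by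
    have e : ∀ p : ZMod M₁ × ZMod M₂, v p * u p
        = L u p * u p - h ^ 2 / 12 * (L v p * u p) := by
      intro p; rw [hv p]; ring
    rw [Finset.sum_congr rfl fun p _ => e p, Finset.sum_sub_distrib,
      ← Finset.mul_sum, parts u u, parts v u, ← hA, ← hC]
    ring
  have e_vv : V = -C + h ^ 2 / 12 * DV := by
    have e : ∀ p : ZMod M₁ × ZMod M₂, v p * v p
        = L u p * v p - h ^ 2 / 12 * (L v p * v p) := by
      intro p; nth_rewrite 1 [hv p]
      ring
    rw [hV, Finset.sum_congr rfl fun p _ => e p, Finset.sum_sub_distrib,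
      ← Finset.mul_sum, parts u v, parts v v, hCC, ← hDV]
    ring
  have hinv : DV ≤ 4 / h ^ 2 * V := by rw [hDV, hV]; exact inv v
  have h4 : h ^ 2 * DV ≤ 4 * V := by
    have := mul_le_mul_of_nonneg_left hinv h2.le
    calc h ^ 2 * DV ≤ h ^ 2 * (4 / h ^ 2 * V) := this
      _ = 4 * V := by field_simp
  have hC' : C = h ^ 2 / 12 * DV - V := by linarith [e_vv]
  rw [e_vu, hC']
  nlinarith [mul_le_mul_of_nonneg_left h4 h2.le]

end Aux

/-- The homogeneous fine-grid linearized compact system has only the trivial solution. -/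
theorem homogeneous_system_trivial [NeZero M₁] [NeZero M₂]
    (h τ lam : ℝ) (hh : 0 < h) (hτ : 0 < τ) (hlam : 0 < lam)
    (a b c u v w : GridFun M₁ M₂)
    (heq : ∀ p, (1 / τ) * u p + (1 / 2) * psih h a u p
        - h ^ 2 / 4 * (psix h b u p + psiy h c u p) = lam / 2 * (v p + w p))
    (hv : ∀ p, v p = dxx h u p - h ^ 2 / 12 * dxx h v p)
    (hw : ∀ p, w p = dyy h u p - h ^ 2 / 12 * dyy h w p) :
    u = 0 ∧ v = 0 ∧ w = 0 := by
  have h2 : (0:ℝ) < h ^ 2 := by positivity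
  set Su := ∑ p : ZMod M₁ × ZMod M₂, u p * u p with hSu
  set Tv := ∑ p : ZMod M₁ × ZMod M₂, v p * u p with hTv
  set Tw := ∑ p : ZMod M₁ × ZMod M₂, w p * u p with hTw
  set Vv := ∑ p : ZMod M₁ × ZMod M₂, v p * v p with hVv
  set Ww := ∑ p : ZMod M₁ × ZMod M₂, w p * w p with hWw
  clear_value Su Tv Tw Vv Ww
  have hSunn : 0 ≤ Su := by
    rw [hSu]; exact Finset.sum_nonneg fun p _ => mul_self_nonneg _
  have hVvnn : 0 ≤ Vv := by
    rw [hVv]; exact Finset.sum_nonneg fun p _ => mul_self_nonneg _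
  have hWwnn : 0 ≤ Ww := by
    rw [hWw]; exact Finset.sum_nonneg fun p _ => mul_self_nonneg _
  -- ψ sums vanish
  have e1 : ∑ p : ZMod M₁ × ZMod M₂, psix h b u p * u p = 0 := by
    have := psi_sum_zero (skew_dhx h) b u
    simpa [psix] using this
  have e2 : ∑ p : ZMod M₁ × ZMod M₂, psiy h c u p * u p = 0 := by
    have := psi_sum_zero (skew_dhy h) c u
    simpa [psiy] using this
  have e3 : ∑ p : ZMod M₁ × ZMod M₂, psih h a u p * u p = 0 := by
    have := psi_sum_zero (skew_dhath h) a u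
    simpa [psih] using this
  -- energy identity
  have hkey : (1 / τ) * Su = lam / 2 * (Tv + Tw) := by
    have hsum : ∑ p : ZMod M₁ × ZMod M₂,
        ((1 / τ) * u p + (1 / 2) * psih h a u p
          - h ^ 2 / 4 * (psix h b u p + psiy h c u p)) * u p
        = ∑ p : ZMod M₁ × ZMod M₂, (lam / 2 * (v p + w p)) * u p :=
      Finset.sum_congr rfl fun p _ => by rw [heq p]
    have eL : ∑ p : ZMod M₁ × ZMod M₂,
        ((1 / τ) * u p + (1 / 2) * psih h a u p
          - h ^ 2 / 4 * (psix h b u p + psiy h c u p)) * u p = (1 / τ) * Su := by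
      have e : ∀ p : ZMod M₁ × ZMod M₂,
          ((1 / τ) * u p + (1 / 2) * psih h a u p
            - h ^ 2 / 4 * (psix h b u p + psiy h c u p)) * u p
          = ((1 / τ) * (u p * u p) + (1 / 2) * (psih h a u p * u p))
            - (h ^ 2 / 4 * (psix h b u p * u p) + h ^ 2 / 4 * (psiy h c u p * u p)) := by
        intro p; ring
      rw [Finset.sum_congr rfl fun p _ => e p, Finset.sum_sub_distrib,
        Finset.sum_add_distrib, Finset.sum_add_distrib,
        ← Finset.mul_sum, ← Finset.mul_sum, ← Finset.mul_sum, ← Finset.mul_sum, e1, e2, e3]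
      rw [hSu]; ring
    have eR : ∑ p : ZMod M₁ × ZMod M₂, (lam / 2 * (v p + w p)) * u p
        = lam / 2 * (Tv + Tw) := by
      have e : ∀ p : ZMod M₁ × ZMod M₂, (lam / 2 * (v p + w p)) * u p
          = lam / 2 * (v p * u p) + lam / 2 * (w p * u p) := by intro p; ring
      rw [Finset.sum_congr rfl fun p _ => e p, Finset.sum_add_distrib,
        ← Finset.mul_sum, ← Finset.mul_sum, ← hTv, ← hTw]
      ring
    rw [← eL, hsum, eR]
  -- compact estimates
  have hTvle : Tv ≤ -(h ^ 2 / 18) * Vv := by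
    rw [hTv, hVv]; exact key_est h hh (parts_dxx h) (fun f => inv_est_x h hh f) u v hv
  have hTwle : Tw ≤ -(h ^ 2 / 18) * Ww := by
    rw [hTw, hWw]; exact key_est h hh (parts_dyy h) (fun f => inv_est_y h hh f) u w hw
  have hTvnp : Tv ≤ 0 := hTvle.trans
    (by rw [neg_mul]; exact neg_nonpos.mpr (mul_nonneg (by positivity) hVvnn))
  have hTwnp : Tw ≤ 0 := hTwle.trans
    (by rw [neg_mul]; exact neg_nonpos.mpr (mul_nonneg (by positivity) hWwnn))
  -- u = 0
  have hSu0 : Su = 0 := by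
    have h1τ : (0:ℝ) < 1 / τ := by positivity
    have hle : (1 / τ) * Su ≤ 0 := by
      rw [hkey]
      exact mul_nonpos_of_nonneg_of_nonpos (by positivity) (by linarith)
    have hz : (1 / τ) * Su = 0 := le_antisymm hle (mul_nonneg h1τ.le hSunn)
    rcases mul_eq_zero.mp hz with h' | h'
    · exact absurd h' h1τ.ne'
    · exact h'
  rw [hSu] at hSu0
  have hu0 : u = 0 := by
    funext p
    have := (Finset.sum_eq_zero_iff_of_nonneg
      (fun p _ => mul_self_nonneg (u p))).mp hSu0 p (Finset.mem_univ p)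
    exact mul_self_eq_zero.mp this
  -- v = 0 and w = 0
  have hTv0 : Tv = 0 := by
    rw [hTv]
    apply Finset.sum_eq_zero
    intro p _; rw [hu0]; simp
  have hTw0 : Tw = 0 := by
    rw [hTw]
    apply Finset.sum_eq_zero
    intro p _; rw [hu0]; simp
  have h18 : (0:ℝ) < h ^ 2 / 18 := by positivity
  have hVv0 : Vv = 0 := by
    have h1 : (h ^ 2 / 18) * Vv ≤ 0 := by
      have := hTv0 ▸ hTvle
      linarith [this]
    have h2' : (h ^ 2 / 18) * Vv = 0 :=
      le_antisymm h1 (mul_nonneg h18.le hVvnn)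
    rcases mul_eq_zero.mp h2' with h' | h'
    · exact absurd h' h18.ne'
    · exact h'
  have hWw0 : Ww = 0 := by
    have h1 : (h ^ 2 / 18) * Ww ≤ 0 := by
      have := hTw0 ▸ hTwle
      linarith [this]
    have h2' : (h ^ 2 / 18) * Ww = 0 :=
      le_antisymm h1 (mul_nonneg h18.le hWwnn)
    rcases mul_eq_zero.mp h2' with h' | h'
    · exact absurd h' h18.ne'
    · exact h'
  rw [hVv] at hVv0
  have hv0 : v = 0 := by
    funext p
    have := (Finset.sum_eq_zero_iff_of_nonneg
      (fun p _ => mul_self_nonneg (v p))).mp hVv0 p (Finset.mem_univ p)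
    exact mul_self_eq_zero.mp this
  rw [hWw] at hWw0
  have hw0 : w = 0 := by
    funext p
    have := (Finset.sum_eq_zero_iff_of_nonneg
      (fun p _ => mul_self_nonneg (w p))).mp hWw0 p (Finset.mem_univ p)
    exact mul_self_eq_zero.mp this
  exact ⟨hu0, hv0, hw0⟩
end

section
/- L²-boundedness of the nonlinear compact difference scheme: let N ≥ 1, τ > 0, λ > 0, and let u, v, w : Fin (N+1) → (periodic grid functions on the M₁×M₂ periodic grid with step size h > 0) be sequences such that (i) for every r with 1 ≤ r ≤ N, writing ū = (u^r + u^{r−1})/2, v̄ = (v^r + v^{r−1})/2, w̄ = (w^r + w^{r−1})/2, the equation (u^r − u^{r−1})/τ + ψh(ū, ū) − (h²/2)·(ψx(v̄, ū) + ψy(w̄, ū)) = λ·(v̄ + w̄) holds at every grid point, and (ii) for every r with 0 ≤ r ≤ N, v^r = δxx u^r − (h²/12)·δxx v^r and w^r = δyy u^r − (h²/12)·δyy w^r at every grid point. Then ‖u^m‖ ≤ ‖u^0‖ for every m with 1 ≤ m ≤ N. -/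
open Real Finset Asymptotics

variable {M₁ M₂ : ℕ}

/-!
Energy method. On a periodic grid, summation by parts makes central differences skew-adjoint, so
each skew-symmetric form `ψ(a, ū)` is orthogonal to `ū`. Pairing the scheme with
`ū = (uʳ + uʳ⁻¹) / 2` therefore leaves `(‖uʳ‖² - ‖uʳ⁻¹‖²) / (2τ) = λ (⟨v̄, ū⟩ + ⟨w̄, ū⟩)`.
The compact relation `v = δxx u - (h²/12) δxx v` is linear, so it passes to the averages, and
together with the inverse estimate `h² ‖δx f‖² ≤ 4 ‖f‖²` it forces `⟨v̄, ū⟩ ≤ 0`; likewise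
`⟨w̄, ū⟩ ≤ 0`. Hence the norm does not increase from one time level to the next.
-/

section PeriodicDifferences

variable {G : Type*} [AddCommGroup G]

noncomputable def forwardDiff (h : ℝ) (e : G) (v : G → ℝ) : G → ℝ :=
  fun p => (v (p + e) - v p) / h

noncomputable def centralDiff (h : ℝ) (e : G) (v : G → ℝ) : G → ℝ :=
  fun p => (v (p + e) - v (p - e)) / (2 * h)

noncomputable def secondDiff (h : ℝ) (e : G) (v : G → ℝ) : G → ℝ :=
  fun p => (v (p + e) - 2 * v p + v (p - e)) / h ^ 2

theorem secondDiff_eq_forwardDiff_sub (h : ℝ) (e : G) (f : G → ℝ) (p : G) :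
    secondDiff h e f p = (forwardDiff h e f p - forwardDiff h e f (p - e)) / h := by
  simp only [secondDiff, forwardDiff, sub_add_cancel]
  ring

/-- `V` is the fourth-order compact approximation `(1 + (h²/12) δₑₑ)⁻¹ δₑₑ U` of the second
derivative of `U` in direction `e`. -/
def IsCompactSecondDiff (h : ℝ) (e : G) (U V : G → ℝ) : Prop :=
  ∀ p, V p = secondDiff h e U p - h ^ 2 / 12 * secondDiff h e V p

theorem IsCompactSecondDiff.average {h : ℝ} {e : G} {U₁ U₀ V₁ V₀ : G → ℝ}
    (h₁ : IsCompactSecondDiff h e U₁ V₁) (h₀ : IsCompactSecondDiff h e U₀ V₀) :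
    IsCompactSecondDiff h e (fun q => (U₁ q + U₀ q) / 2) (fun q => (V₁ q + V₀ q) / 2) := by
  intro p
  have hp₁ := h₁ p
  have hp₀ := h₀ p
  simp only [secondDiff] at hp₁ hp₀ ⊢
  linear_combination (hp₁ + hp₀) / 2

variable [Fintype G]

theorem sum_mul_comp_add (f g : G → ℝ) (e : G) :
    ∑ p, f (p + e) * g p = ∑ p, f p * g (p - e) := by
  rw [← Equiv.sum_comp (Equiv.subRight e)]
  simp

theorem centralDiff_dotProduct (h : ℝ) (e : G) (f g : G → ℝ) :
    centralDiff h e f ⬝ᵥ g = -(f ⬝ᵥ centralDiff h e g) := by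
  have hplus := sum_mul_comp_add f g e
  have hminus := sum_mul_comp_add f g (-e)
  simp only [sub_neg_eq_add, ← sub_eq_add_neg] at hminus
  simp only [dotProduct, centralDiff, div_mul_eq_mul_div, mul_div_assoc', ← Finset.sum_div,
    sub_mul, mul_sub, Finset.sum_sub_distrib, hplus, hminus]
  ring

theorem sum_sub_comp_sub_mul (F g : G → ℝ) (e : G) :
    ∑ p, (F p - F (p - e)) * g p = -∑ p, F p * (g (p + e) - g p) := by
  have hshift := sum_mul_comp_add F g (-e)
  simp only [sub_neg_eq_add, ← sub_eq_add_neg] at hshift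
  simp only [sub_mul, mul_sub, Finset.sum_sub_distrib, hshift]
  ring

theorem secondDiff_dotProduct (h : ℝ) (e : G) (f g : G → ℝ) :
    secondDiff h e f ⬝ᵥ g = -(forwardDiff h e f ⬝ᵥ forwardDiff h e g) :=
  calc secondDiff h e f ⬝ᵥ g
      = ∑ p, (forwardDiff h e f p - forwardDiff h e f (p - e)) * (g p / h) := by
        simp only [dotProduct, secondDiff_eq_forwardDiff_sub, div_mul_eq_mul_div, mul_div_assoc]
    _ = -(forwardDiff h e f ⬝ᵥ forwardDiff h e g) := by
        simp only [sum_sub_comp_sub_mul, dotProduct, forwardDiff, sub_div]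

theorem sq_mul_forwardDiff_dotProduct_self_le (h : ℝ) (e : G) (f : G → ℝ) :
    h ^ 2 * (forwardDiff h e f ⬝ᵥ forwardDiff h e f) ≤ 4 * (f ⬝ᵥ f) := by
  have hterm : ∀ p, h ^ 2 * (forwardDiff h e f p * forwardDiff h e f p)
      ≤ 2 * (f (p + e) * f (p + e)) + 2 * (f p * f p) := by
    intro p
    rcases eq_or_ne h 0 with rfl | hh
    · simp only [forwardDiff, div_zero, mul_zero, zero_pow two_ne_zero]
      nlinarith [mul_self_nonneg (f (p + e)), mul_self_nonneg (f p)]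
    · rw [forwardDiff, ← pow_two, div_pow, mul_div_cancel₀ _ (pow_ne_zero 2 hh)]
      nlinarith [sq_nonneg (f (p + e) + f p)]
  calc h ^ 2 * (forwardDiff h e f ⬝ᵥ forwardDiff h e f)
      ≤ ∑ p, (2 * (f (p + e) * f (p + e)) + 2 * (f p * f p)) := by
        rw [dotProduct, Finset.mul_sum]; exact Finset.sum_le_sum fun p _ => hterm p
    _ = 4 * (f ⬝ᵥ f) := by
        have hshift : ∑ p, f (p + e) * f (p + e) = ∑ p, f p * f p :=
          Equiv.sum_comp (Equiv.addRight e) (fun p => f p * f p)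
        rw [Finset.sum_add_distrib, ← Finset.mul_sum, ← Finset.mul_sum, hshift, dotProduct]
        ring


theorem IsCompactSecondDiff.dotProduct_nonpos {h : ℝ} {e : G} {U V : G → ℝ}
    (hUV : IsCompactSecondDiff h e U V) : V ⬝ᵥ U ≤ 0 := by
  -- `⟨V, U⟩ = -|δU|² - (h²/12)‖V‖² + (h²/12)²|δV|²`, and the inverse estimate bounds the
  -- last term by `(h²/36)‖V‖²`.
  have hV : V = secondDiff h e U - (h ^ 2 / 12) • secondDiff h e V := funext hUV
  have hU : secondDiff h e U = V + (h ^ 2 / 12) • secondDiff h e V :=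
    sub_eq_iff_eq_add.mp hV.symm
  have hVU : V ⬝ᵥ U = -(forwardDiff h e U ⬝ᵥ forwardDiff h e U)
      - h ^ 2 / 12 * (secondDiff h e V ⬝ᵥ U) := by
    conv_lhs => rw [hV]
    rw [sub_dotProduct, smul_dotProduct, secondDiff_dotProduct, smul_eq_mul]
  have hAVU : secondDiff h e V ⬝ᵥ U
      = V ⬝ᵥ V - h ^ 2 / 12 * (forwardDiff h e V ⬝ᵥ forwardDiff h e V) := by
    rw [secondDiff_dotProduct, dotProduct_comm (forwardDiff h e V), ← secondDiff_dotProduct, hU,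
      add_dotProduct, smul_dotProduct, secondDiff_dotProduct, smul_eq_mul]
    ring
  have hDU : 0 ≤ forwardDiff h e U ⬝ᵥ forwardDiff h e U :=
    Fintype.sum_nonneg fun _ => mul_self_nonneg _
  have hVV : 0 ≤ V ⬝ᵥ V := Fintype.sum_nonneg fun _ => mul_self_nonneg _
  have hDV := sq_mul_forwardDiff_dotProduct_self_le h e V
  rw [hVU, hAVU]
  nlinarith [sq_nonneg h]

end PeriodicDifferences

section SkewForm

variable {G : Type*} [Fintype G]

/-- `psix h`, `psiy h` and `psih h` are definitionally `skewForm` of `dhx h`, `dhy h`, `dhath h`. -/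
noncomputable def skewForm (D : (G → ℝ) → G → ℝ) (u v : G → ℝ) : G → ℝ :=
  fun p => (1 / 3 : ℝ) * (u p * D v p + D (fun q => u q * v q) p)

theorem skewForm_dotProduct_self {D : (G → ℝ) → G → ℝ} (hD : ∀ f g, D f ⬝ᵥ g = -(f ⬝ᵥ D g))
    (u v : G → ℝ) : skewForm D u v ⬝ᵥ v = 0 := by
  have hsplit : skewForm D u v ⬝ᵥ v
      = 1 / 3 * ((fun q => u q * v q) ⬝ᵥ D v + D (fun q => u q * v q) ⬝ᵥ v) := by
    simp only [skewForm, dotProduct, Finset.mul_sum, ← Finset.sum_add_distrib]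
    exact Finset.sum_congr rfl fun p _ => by ring
  rw [hsplit, hD]
  ring

end SkewForm

section Grid

theorem dhx_eq_centralDiff (h : ℝ) (v : GridFun M₁ M₂) : dhx h v = centralDiff h (1, 0) v := by
  funext ⟨a, b⟩
  simp [dhx, centralDiff]

theorem dhy_eq_centralDiff (h : ℝ) (v : GridFun M₁ M₂) : dhy h v = centralDiff h (0, 1) v := by
  funext ⟨a, b⟩
  simp [dhy, centralDiff]

theorem dxx_eq_secondDiff (h : ℝ) (v : GridFun M₁ M₂) : dxx h v = secondDiff h (1, 0) v := by
  funext ⟨a, b⟩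
  simp [dxx, secondDiff]

theorem dyy_eq_secondDiff (h : ℝ) (v : GridFun M₁ M₂) : dyy h v = secondDiff h (0, 1) v := by
  funext ⟨a, b⟩
  simp [dyy, secondDiff]

variable [NeZero M₁] [NeZero M₂]

theorem dhx_dotProduct (h : ℝ) (f g : GridFun M₁ M₂) : dhx h f ⬝ᵥ g = -(f ⬝ᵥ dhx h g) := by
  simp only [dhx_eq_centralDiff, centralDiff_dotProduct]

theorem dhy_dotProduct (h : ℝ) (f g : GridFun M₁ M₂) : dhy h f ⬝ᵥ g = -(f ⬝ᵥ dhy h g) := by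
  simp only [dhy_eq_centralDiff, centralDiff_dotProduct]

theorem dhath_dotProduct (h : ℝ) (f g : GridFun M₁ M₂) :
    dhath h f ⬝ᵥ g = -(f ⬝ᵥ dhath h g) := by
  change (dhx h f + dhy h f) ⬝ᵥ g = -(f ⬝ᵥ (dhx h g + dhy h g))
  rw [add_dotProduct, dotProduct_add, dhx_dotProduct, dhy_dotProduct, neg_add]

theorem psix_dotProduct_self (h : ℝ) (u v : GridFun M₁ M₂) : psix h u v ⬝ᵥ v = 0 :=
  skewForm_dotProduct_self (dhx_dotProduct h) u v

theorem psiy_dotProduct_self (h : ℝ) (u v : GridFun M₁ M₂) : psiy h u v ⬝ᵥ v = 0 :=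
  skewForm_dotProduct_self (dhy_dotProduct h) u v

theorem psih_dotProduct_self (h : ℝ) (u v : GridFun M₁ M₂) : psih h u v ⬝ᵥ v = 0 :=
  skewForm_dotProduct_self (dhath_dotProduct h) u v

theorem dotProduct_self_le_of_scheme_step {h τ lam : ℝ} (hτ : 0 < τ) (hlam : 0 ≤ lam)
    {u₁ u₀ v w : GridFun M₁ M₂}
    (hv : v ⬝ᵥ (fun q => (u₁ q + u₀ q) / 2) ≤ 0) (hw : w ⬝ᵥ (fun q => (u₁ q + u₀ q) / 2) ≤ 0)
    (heq : ∀ p, (u₁ p - u₀ p) / τ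
        + psih h (fun q => (u₁ q + u₀ q) / 2) (fun q => (u₁ q + u₀ q) / 2) p
        - h ^ 2 / 2 * (psix h v (fun q => (u₁ q + u₀ q) / 2) p
          + psiy h w (fun q => (u₁ q + u₀ q) / 2) p)
      = lam * (v p + w p)) :
    u₁ ⬝ᵥ u₁ ≤ u₀ ⬝ᵥ u₀ := by
  set ū : GridFun M₁ M₂ := fun q => (u₁ q + u₀ q) / 2
  have htime : (fun p => (u₁ p - u₀ p) / τ) ⬝ᵥ ū = (u₁ ⬝ᵥ u₁ - u₀ ⬝ᵥ u₀) / (2 * τ) := by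
    simp only [ū, dotProduct, Finset.sum_div, ← Finset.sum_sub_distrib]
    exact Finset.sum_congr rfl fun p _ => by field_simp; ring
  have henergy := congrArg (· ⬝ᵥ ū) (funext heq)
  change ((fun p => (u₁ p - u₀ p) / τ) + psih h ū ū - (h ^ 2 / 2) • (psix h v ū + psiy h w ū))
      ⬝ᵥ ū = (lam • (v + w)) ⬝ᵥ ū at henergy
  rw [sub_dotProduct, add_dotProduct, smul_dotProduct, add_dotProduct, htime,
    psih_dotProduct_self, psix_dotProduct_self, psiy_dotProduct_self, smul_dotProduct,
    add_dotProduct, smul_eq_mul, smul_eq_mul] at henergy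
  have hdecay : (u₁ ⬝ᵥ u₁ - u₀ ⬝ᵥ u₀) / (2 * τ) ≤ 0 := by
    linarith [mul_nonpos_of_nonneg_of_nonpos hlam (add_nonpos hv hw)]
  rwa [div_le_iff₀ (by positivity), zero_mul, sub_nonpos] at hdecay

theorem gnorm_le_gnorm_of_dotProduct_le (h : ℝ) {u v : GridFun M₁ M₂} (huv : u ⬝ᵥ u ≤ v ⬝ᵥ v) :
    gnorm h u ≤ gnorm h v := by
  have hgip : ∀ f g : GridFun M₁ M₂, gip h f g = h ^ 2 * (f ⬝ᵥ g) := fun f g => by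
    rw [gip, dotProduct, Fintype.sum_prod_type]
  rw [gnorm, gnorm, hgip, hgip]
  exact Real.sqrt_le_sqrt (mul_le_mul_of_nonneg_left huv (sq_nonneg h))

end Grid

theorem ncd_l2_bounded_general [NeZero M₁] [NeZero M₂]
    (h τ lam : ℝ) (hτ : 0 < τ) (hlam : 0 < lam)
    (N : ℕ) (u v w : ℕ → GridFun M₁ M₂)
    (heq : ∀ r, 1 ≤ r → r ≤ N → ∀ p,
      (u r p - u (r - 1) p) / τ
        + psih h (fun q => (u r q + u (r - 1) q) / 2)
            (fun q => (u r q + u (r - 1) q) / 2) p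
        - h ^ 2 / 2 *
            (psix h (fun q => (v r q + v (r - 1) q) / 2)
                (fun q => (u r q + u (r - 1) q) / 2) p
              + psiy h (fun q => (w r q + w (r - 1) q) / 2)
                  (fun q => (u r q + u (r - 1) q) / 2) p)
      = lam * ((v r p + v (r - 1) p) / 2 + (w r p + w (r - 1) p) / 2))
    (hv : ∀ r, r ≤ N → ∀ p, v r p = dxx h (u r) p - h ^ 2 / 12 * dxx h (v r) p)
    (hw : ∀ r, r ≤ N → ∀ p, w r p = dyy h (u r) p - h ^ 2 / 12 * dyy h (w r) p) :
    ∀ m, 1 ≤ m → m ≤ N → gnorm h (u m) ≤ gnorm h (u 0) := by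
  have hvx : ∀ r ≤ N, IsCompactSecondDiff h (1, 0) (u r) (v r) := fun r hr => by
    simpa only [IsCompactSecondDiff, dxx_eq_secondDiff] using hv r hr
  have hwy : ∀ r ≤ N, IsCompactSecondDiff h (0, 1) (u r) (w r) := fun r hr => by
    simpa only [IsCompactSecondDiff, dyy_eq_secondDiff] using hw r hr
  have hstep : ∀ r, 1 ≤ r → r ≤ N → u r ⬝ᵥ u r ≤ u (r - 1) ⬝ᵥ u (r - 1) := fun r hr hrN =>
    dotProduct_self_le_of_scheme_step hτ hlam.le
      ((hvx r hrN).average (hvx (r - 1) (by omega))).dotProduct_nonpos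
      ((hwy r hrN).average (hwy (r - 1) (by omega))).dotProduct_nonpos
      (heq r hr hrN)
  have hdecay : ∀ m ≤ N, u m ⬝ᵥ u m ≤ u 0 ⬝ᵥ u 0 := by
    intro m
    induction m with
    | zero => exact fun _ => le_rfl
    | succ k ih => exact fun hk => (hstep (k + 1) (by omega) hk).trans (ih (by omega))
  exact fun m _ hmN => gnorm_le_gnorm_of_dotProduct_le h (hdecay m hmN)

/-- L²-boundedness of the nonlinear compact difference scheme. -/
theorem ncd_l2_bounded [NeZero M₁] [NeZero M₂]
    (h τ lam : ℝ) (hh : 0 < h) (hτ : 0 < τ) (hlam : 0 < lam)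
    (N : ℕ) (hN : 1 ≤ N) (u v w : ℕ → GridFun M₁ M₂)
    (heq : ∀ r, 1 ≤ r → r ≤ N → ∀ p,
      (u r p - u (r - 1) p) / τ
        + psih h (fun q => (u r q + u (r - 1) q) / 2)
            (fun q => (u r q + u (r - 1) q) / 2) p
        - h ^ 2 / 2 *
            (psix h (fun q => (v r q + v (r - 1) q) / 2)
                (fun q => (u r q + u (r - 1) q) / 2) p
              + psiy h (fun q => (w r q + w (r - 1) q) / 2)
                  (fun q => (u r q + u (r - 1) q) / 2) p)
      = lam * ((v r p + v (r - 1) p) / 2 + (w r p + w (r - 1) p) / 2))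
    (hv : ∀ r, r ≤ N → ∀ p, v r p = dxx h (u r) p - h ^ 2 / 12 * dxx h (v r) p)
    (hw : ∀ r, r ≤ N → ∀ p, w r p = dyy h (u r) p - h ^ 2 / 12 * dyy h (w r) p) :
    ∀ m, 1 ≤ m → m ≤ N → gnorm h (u m) ≤ gnorm h (u 0) :=
  ncd_l2_bounded_general h τ lam hτ hlam N u v w heq hv hw
end
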